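/- There is no rational function φ_z(t) ∈ ℚ(t), nonconstant, such that both √(1 + 4φ_z(t)) and √(φ_z(t)(φ_z(t) − 4)) are rational functions of t. -/

import Mathlib

/-!
Write `φ = a / b` in lowest terms. Then `(p b)² = b (4a + b)` and `(q b)² = a (a - 4b)` are squares
of polynomials, so each of the pairwise coprime forms `a, b, 4a + b, a - 4b` is a unit times a
square `A², B², C², D²`. A square factor `A²` of `f` makes `A` divide both `f` and `f'`, hence
every Wronskian `W(f, g)`; and the Wronskian of any two of the four forms is a nonzero
constant multiple of `W = W(a, b)`, which is nonzero because `φ` is not constant. Hence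
`ABCD ∣ W`, i.e. half the total degree of the four forms is at most `deg W`, whereas
`deg W < deg a + deg b` and `deg W < deg (4a + b) + deg (a - 4b)`.
-/

open Function Polynomial

theorem IsCoprime.mul_add_mul {R : Type*} [CommRing R] {a b p q r s : R} (h : IsCoprime a b)
    (hdet : IsUnit (p * s - q * r)) : IsCoprime (p * a + q * b) (r * a + s * b) := by
  obtain ⟨u, v, huv⟩ := h
  obtain ⟨e, he⟩ := hdet.exists_left_inv
  exact ⟨e * (u * s - v * r), e * (v * p - u * q), by
    linear_combination e * (p * s - q * r) * huv + he⟩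

theorem IsCoprime.exists_associated_sq_of_isSquare_mul {R : Type*} [CommRing R] [IsDomain R]
    [IsBezout R] {a b : R} (hab : IsCoprime a b) (h : IsSquare (a * b)) :
    (∃ A, Associated (A ^ 2) a) ∧ ∃ B, Associated (B ^ 2) b := by
  obtain ⟨c, hc⟩ := h
  rw [← sq] at hc
  exact ⟨exists_associated_pow_of_mul_eq_pow' hab hc,
    exists_associated_pow_of_mul_eq_pow' hab.symm (by rw [mul_comm, hc])⟩

theorem IsIntegrallyClosed.isSquare_of_isSquare_algebraMap {R K : Type*} [CommRing R] [Field K]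
    [Algebra R K] [IsFractionRing R K] [IsIntegrallyClosed R] {r : R}
    (h : IsSquare (algebraMap R K r)) : IsSquare r := by
  obtain ⟨x, hx⟩ := h
  obtain ⟨y, rfl⟩ := exists_algebraMap_eq_of_isIntegral_pow (R := R) (x := x) two_pos
    (by rw [sq, ← hx]; exact isIntegral_algebraMap)
  exact ⟨y, IsFractionRing.injective R K (by rw [hx, map_mul])⟩

namespace Polynomial

section CommRing

variable {R : Type*} [CommRing R]

theorem dvd_wronskian_left_of_sq_dvd {A f : R[X]} (h : A ^ 2 ∣ f) (g : R[X]) :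
    A ∣ wronskian f g := by
  have hf : A ∣ f := (dvd_pow_self A two_ne_zero).trans h
  have hf' : A ∣ derivative f := by simpa using pow_sub_one_dvd_derivative_of_pow_dvd h
  exact (hf.mul_right _).sub (hf'.mul_right _)

theorem wronskian_C_mul_add_C_mul (a b : R[X]) (p q r s : R) :
    wronskian (C p * a + C q * b) (C r * a + C s * b) = C (p * s - q * r) * wronskian a b := by
  simp only [wronskian, derivative_add, derivative_C_mul, map_sub, map_mul]
  ring

theorem natDegree_eq_two_mul_of_associated_sq [IsDomain R] {A f : R[X]}
    (h : Associated (A ^ 2) f) : f.natDegree = 2 * A.natDegree := by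
  rw [← natDegree_eq_of_degree_eq (degree_eq_degree_of_associated h), natDegree_pow]

end CommRing

theorem not_forall_associated_sq_C_mul_add_C_mul {K : Type*} [Field K] {a b : K[X]}
    (hab : IsCoprime a b) (hW : wronskian a b ≠ 0) {p q : Fin 4 → K}
    (hpq : Pairwise fun i j => p i * q j - q i * p j ≠ 0) :
    ¬ ∀ i, ∃ A : K[X], Associated (A ^ 2) (C (p i) * a + C (q i) * b) := by
  intro h
  choose A hA using h
  set ℓ : Fin 4 → K[X] := fun i => C (p i) * a + C (q i) * b
  have hunit {i j : Fin 4} (hij : i ≠ j) : IsUnit (C (p i * q j - q i * p j)) :=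
    isUnit_C.2 (hpq hij).isUnit
  have hℓW {i j : Fin 4} (hij : i ≠ j) :
      wronskian (ℓ i) (ℓ j) = C (p i * q j - q i * p j) * wronskian a b :=
    wronskian_C_mul_add_C_mul a b _ _ _ _
  have hdegW {i j : Fin 4} (hij : i ≠ j) :
      (wronskian a b).natDegree < (ℓ i).natDegree + (ℓ j).natDegree := by
    have hne : wronskian (ℓ i) (ℓ j) ≠ 0 := by
      rw [hℓW hij]; exact mul_ne_zero (C_ne_zero.2 (hpq hij)) hW
    simpa only [hℓW hij, natDegree_C_mul (hpq hij)] using natDegree_wronskian_lt_add hne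
  have hℓcop {i j : Fin 4} (hij : i ≠ j) : IsCoprime (ℓ i) (ℓ j) :=
    hab.mul_add_mul (by rw [← C_mul, ← C_mul, ← C_sub]; exact hunit hij)
  have hcop : Pairwise (IsCoprime on A) := fun i j hij =>
    ((hℓcop hij).of_isCoprime_of_dvd_left ((dvd_pow_self _ two_ne_zero).trans (hA i).dvd))
      |>.of_isCoprime_of_dvd_right ((dvd_pow_self _ two_ne_zero).trans (hA j).dvd)
  have hdvd (i : Fin 4) : A i ∣ wronskian a b := by
    have hi : i ≠ i + 1 := by fin_cases i <;> decide
    rw [← (hunit hi).dvd_mul_left, ← hℓW hi]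
    exact dvd_wronskian_left_of_sq_dvd (hA i).dvd _
  have hprod : ∏ i, A i ∣ wronskian a b :=
    Finset.prod_dvd_of_coprime (hcop.set_pairwise _) fun i _ => hdvd i
  have hA0 : ∀ i, A i ≠ 0 := by
    simpa [Finset.prod_ne_zero_iff] using ne_zero_of_dvd_ne_zero hW hprod
  have hdeg := natDegree_le_of_dvd hprod hW
  rw [natDegree_prod _ _ fun i _ => hA0 i, Fin.sum_univ_four] at hdeg
  have h01 := hdegW (show (0 : Fin 4) ≠ 1 by decide)
  have h23 := hdegW (show (2 : Fin 4) ≠ 3 by decide)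
  have h2 (i : Fin 4) := natDegree_eq_two_mul_of_associated_sq (hA i)
  rw [h2, h2] at h01 h23
  omega

end Polynomial

namespace RatFunc

variable {K : Type*} [Field K]

theorem wronskian_num_denom_ne_zero [CharZero K] {z : RatFunc K} (hz : ¬ ∃ c, z = C c) :
    wronskian z.num z.denom ≠ 0 := by
  intro hW
  obtain ⟨ha, hb⟩ := z.isCoprime_num_denom.wronskian_eq_zero_iff.1 hW
  obtain ⟨ca, hca⟩ : ∃ c, z.num = Polynomial.C c := ⟨_, eq_C_of_derivative_eq_zero ha⟩
  obtain ⟨cb, hcb⟩ : ∃ c, z.denom = Polynomial.C c := ⟨_, eq_C_of_derivative_eq_zero hb⟩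
  refine hz ⟨ca / cb, ?_⟩
  rw [← z.num_div_denom, hca, hcb, algebraMap_C, algebraMap_C, map_div₀]

theorem isSquare_denom_mul_of_sq_eq_one_add_four_mul {z p : RatFunc K} (hp : p ^ 2 = 1 + 4 * z) :
    IsSquare (z.denom * (4 * z.num + z.denom)) := by
  refine IsIntegrallyClosed.isSquare_of_isSquare_algebraMap (K := RatFunc K)
    ⟨p * algebraMap _ _ z.denom, ?_⟩
  have hb : algebraMap K[X] (RatFunc K) z.denom ≠ 0 := algebraMap_ne_zero z.denom_ne_zero
  have hz := z.num_div_denom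
  set a := z.num
  set b := z.denom
  rw [← sq, mul_pow, hp, ← hz]
  simp only [map_mul, map_add, map_ofNat]
  field_simp
  ring

theorem isSquare_num_mul_of_sq_eq_mul_sub_four {z q : RatFunc K} (hq : q ^ 2 = z * (z - 4)) :
    IsSquare (z.num * (z.num - 4 * z.denom)) := by
  refine IsIntegrallyClosed.isSquare_of_isSquare_algebraMap (K := RatFunc K)
    ⟨q * algebraMap _ _ z.denom, ?_⟩
  have hb : algebraMap K[X] (RatFunc K) z.denom ≠ 0 := algebraMap_ne_zero z.denom_ne_zero
  have hz := z.num_div_denom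
  set a := z.num
  set b := z.denom
  rw [← sq, mul_pow, hq, ← hz]
  simp only [map_mul, map_sub, map_ofNat]
  field_simp

end RatFunc

theorem no_simultaneous_rationalization :
    ¬ ∃ φz p q : RatFunc ℚ, (¬ ∃ c : ℚ, φz = RatFunc.C c) ∧
      p^2 = 1 + 4*φz ∧ q^2 = φz * (φz - 4) := by
  rintro ⟨z, p, q, hnc, hp, hq⟩
  have hab : IsCoprime z.num z.denom := z.isCoprime_num_denom
  have h4 : IsUnit (4 : ℚ[X]) := by rw [← map_ofNat C 4]; simp
  have hcop₁ : IsCoprime z.denom (4 * z.num + z.denom) := by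
    simpa using hab.mul_add_mul (p := 0) (q := 1) (r := 4) (s := 1) (by simpa)
  have hcop₂ : IsCoprime z.num (z.num - 4 * z.denom) := by
    simpa [← sub_eq_add_neg] using hab.mul_add_mul (p := 1) (q := 0) (r := 1) (s := -4) (by simpa)
  obtain ⟨hsb, hsc⟩ := hcop₁.exists_associated_sq_of_isSquare_mul
    (RatFunc.isSquare_denom_mul_of_sq_eq_one_add_four_mul hp)
  obtain ⟨hsa, hsd⟩ := hcop₂.exists_associated_sq_of_isSquare_mul
    (RatFunc.isSquare_num_mul_of_sq_eq_mul_sub_four hq)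
  refine not_forall_associated_sq_C_mul_add_C_mul hab (RatFunc.wronskian_num_denom_ne_zero hnc)
    (p := ![1, 0, 4, 1]) (q := ![0, 1, 1, -4]) ?_ ?_
  · intro i j hij
    fin_cases i <;> fin_cases j <;> simp_all <;> norm_num
  · intro i
    fin_cases i <;> simpa
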